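/- If Ẑ₁ is a deterministic function of X₁ and Ẑ₂ is a deterministic function of X₂ (where X₁ and X₂ may be dependent), then the interaction information I(X₁,X₂; Ẑ₁; Ẑ₂) is nonnegative and satisfies I(X₁,X₂; Ẑ₁,Ẑ₂) ≤ I(X₁; Ẑ₁) + I(X₂; Ẑ₂). -/
import Mathlib


open scoped BigOperators
open scoped Classical

noncomputable section

namespace GW

variable {Ω : Type*} [Fintype Ω]

/-- Probability P[X = x] under a weight function `p` on a finite sample space. -/
def pr {α : Type*} (p : Ω → ℝ) (X : Ω → α) (x : α) : ℝ :=
  ∑ ω, Set.indicator {ω' | X ω' = x} p ω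

/-- `p` is a probability mass function on the sample space. -/
def IsProb (p : Ω → ℝ) : Prop := (∀ ω, 0 ≤ p ω) ∧ ∑ ω, p ω = 1

/-- The paired random variable (X, Y). -/
def pair {α β : Type*} (X : Ω → α) (Y : Ω → β) : Ω → α × β := fun ω => (X ω, Y ω)

/-- Mutual information I(X;Y). -/
def mi {α β : Type*} [Fintype α] [Fintype β] (p : Ω → ℝ) (X : Ω → α) (Y : Ω → β) : ℝ :=
  ∑ x, ∑ y, pr p (pair X Y) (x, y) *
    Real.log (pr p (pair X Y) (x, y) / (pr p X x * pr p Y y))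

/-- Conditional mutual information I(X;Y|Z). -/
def cmi {α β γ : Type*} [Fintype α] [Fintype β] [Fintype γ]
    (p : Ω → ℝ) (X : Ω → α) (Y : Ω → β) (Z : Ω → γ) : ℝ :=
  ∑ x, ∑ y, ∑ z,
    pr p (pair X (pair Y Z)) (x, y, z) *
      Real.log (pr p (pair X (pair Y Z)) (x, y, z) * pr p Z z /
        (pr p (pair X Z) (x, z) * pr p (pair Y Z) (y, z)))

/-- Interaction information I(X;Y;Z) = I(X;Y) - I(X;Y|Z). -/
def ii {α β γ : Type*} [Fintype α] [Fintype β] [Fintype γ]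
    (p : Ω → ℝ) (X : Ω → α) (Y : Ω → β) (Z : Ω → γ) : ℝ :=
  mi p X Y - cmi p X Y Z

/-- Conditional interaction information I(X;Y;Z|W) = I(X;Y|W) - I(X;Y|Z,W). -/
def cii {α β γ δ : Type*} [Fintype α] [Fintype β] [Fintype γ] [Fintype δ]
    (p : Ω → ℝ) (X : Ω → α) (Y : Ω → β) (Z : Ω → γ) (W : Ω → δ) : ℝ :=
  cmi p X Y W - cmi p X Y (pair Z W)

/-- Shannon entropy H(X). -/
def ent {α : Type*} [Fintype α] (p : Ω → ℝ) (X : Ω → α) : ℝ :=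
  - ∑ x, pr p X x * Real.log (pr p X x)

/-- Conditional entropy H(Y|X). -/
def condEnt {α β : Type*} [Fintype α] [Fintype β] (p : Ω → ℝ) (Y : Ω → β) (X : Ω → α) : ℝ :=
  - ∑ x, ∑ y, pr p (pair X Y) (x, y) * Real.log (pr p (pair X Y) (x, y) / pr p X x)

/-- Conditional independence A ⊥ B | C (i.e. the Markov chain A ↔ C ↔ B). -/
def CondIndep {α β γ : Type*} (p : Ω → ℝ) (A : Ω → α) (B : Ω → β) (C : Ω → γ) : Prop :=
  ∀ a b c, pr p (pair A (pair B C)) (a, b, c) * pr p C c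
    = pr p (pair A C) (a, c) * pr p (pair B C) (b, c)


lemma pr_eq {α : Type*} (p : Ω → ℝ) (X : Ω → α) (x : α) :
    pr p X x = ∑ ω, if X ω = x then p ω else 0 := by
  unfold pr
  refine Finset.sum_congr rfl fun ω _ => ?_
  simp [Set.indicator_apply]

lemma pr_nonneg {α : Type*} {p : Ω → ℝ} (hp0 : ∀ ω, 0 ≤ p ω) (X : Ω → α) (x : α) :
    0 ≤ pr p X x := by
  rw [pr_eq]
  refine Finset.sum_nonneg fun ω _ => ?_
  split <;> simp [hp0 ω]

lemma sum_pr {α : Type*} [Fintype α] (p : Ω → ℝ) (X : Ω → α) :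
    ∑ x, pr p X x = ∑ ω, p ω := by
  simp only [pr_eq]
  rw [Finset.sum_comm]
  refine Finset.sum_congr rfl fun ω _ => ?_
  simp

lemma pr_pair_fst {α β : Type*} [Fintype β] (p : Ω → ℝ) (X : Ω → α) (Y : Ω → β) (x : α) :
    ∑ y, pr p (pair X Y) (x, y) = pr p X x := by
  simp only [pr_eq, pair, Prod.mk.injEq]
  rw [Finset.sum_comm]
  refine Finset.sum_congr rfl fun ω _ => ?_
  by_cases h : X ω = x <;> simp [h]

lemma pr_pair_comm {α β : Type*} (p : Ω → ℝ) (X : Ω → α) (Y : Ω → β) (x : α) (y : β) :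
    pr p (pair X Y) (x, y) = pr p (pair Y X) (y, x) := by
  simp only [pr_eq, pair, Prod.mk.injEq]
  exact Finset.sum_congr rfl fun ω _ => by simp [and_comm]

lemma pr_pair_snd {α β : Type*} [Fintype α] (p : Ω → ℝ) (X : Ω → α) (Y : Ω → β) (y : β) :
    ∑ x, pr p (pair X Y) (x, y) = pr p Y y := by
  simp only [fun x => pr_pair_comm p X Y x y]
  exact pr_pair_fst p Y X y

lemma pr_pair_le_fst {α β : Type*} {p : Ω → ℝ} (hp0 : ∀ ω, 0 ≤ p ω)
    (X : Ω → α) (Y : Ω → β) (x : α) (y : β) :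
    pr p (pair X Y) (x, y) ≤ pr p X x := by
  simp only [pr_eq, pair, Prod.mk.injEq]
  refine Finset.sum_le_sum fun ω _ => ?_
  by_cases h : X ω = x <;> by_cases h' : Y ω = y <;> simp [h, h', hp0 ω]

lemma pr_pair_le_snd {α β : Type*} {p : Ω → ℝ} (hp0 : ∀ ω, 0 ≤ p ω)
    (X : Ω → α) (Y : Ω → β) (x : α) (y : β) :
    pr p (pair X Y) (x, y) ≤ pr p Y y := by
  rw [pr_pair_comm]; exact pr_pair_le_fst hp0 Y X y x

section Det
variable {α β γ : Type*} {p : Ω → ℝ} {X : Ω → α} {Z : Ω → β} {g : α → β}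

lemma pr_det (hz : ∀ ω, Z ω = g (X ω)) (x : α) (z : β) :
    pr p (pair X Z) (x, z) = if z = g x then pr p X x else 0 := by
  simp only [pr_eq, pair, Prod.mk.injEq, hz]
  by_cases h : z = g x
  · subst h
    rw [if_pos rfl]
    refine Finset.sum_congr rfl fun ω _ => ?_
    by_cases hx : X ω = x <;> simp [hx]
  · rw [if_neg h, Finset.sum_eq_zero]
    intro ω _
    by_cases hx : X ω = x <;> simp [hx]
    intro h'; exact absurd h'.symm h

lemma pr_det_pair (hz : ∀ ω, Z ω = g (X ω)) (W : Ω → γ) (x : α) (z : β) (w : γ) :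
    pr p (pair X (pair Z W)) (x, z, w) = if z = g x then pr p (pair X W) (x, w) else 0 := by
  simp only [pr_eq, pair, Prod.mk.injEq, hz]
  by_cases h : z = g x
  · subst h
    rw [if_pos rfl]
    refine Finset.sum_congr rfl fun ω _ => ?_
    by_cases hx : X ω = x <;> simp [hx, and_comm, and_assoc]
  · rw [if_neg h, Finset.sum_eq_zero]
    intro ω _
    by_cases hx : X ω = x <;> simp [hx]
    intro h'; exact absurd h'.symm h

lemma pr_comp [Fintype α] (hz : ∀ ω, Z ω = g (X ω)) (z : β) :
    pr p Z z = ∑ x, if g x = z then pr p X x else 0 := by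
  rw [← pr_pair_snd p X Z z]
  refine Finset.sum_congr rfl fun x _ => ?_
  rw [pr_det hz]
  by_cases h : g x = z
  · simp [h]
  · rw [if_neg h, if_neg fun h' => h h'.symm]

lemma pr_comp_pair [Fintype α] (hz : ∀ ω, Z ω = g (X ω)) (W : Ω → γ) (z : β) (w : γ) :
    pr p (pair Z W) (z, w) = ∑ x, if g x = z then pr p (pair X W) (x, w) else 0 := by
  rw [← pr_pair_snd p X (pair Z W) (z, w)]
  refine Finset.sum_congr rfl fun x _ => ?_
  rw [pr_det_pair hz]
  by_cases h : g x = z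
  · simp [h]
  · rw [if_neg h, if_neg fun h' => h h'.symm]

lemma pr_le_comp (hp0 : ∀ ω, 0 ≤ p ω) (hz : ∀ ω, Z ω = g (X ω)) (x : α) :
    pr p X x ≤ pr p Z (g x) := by
  simp only [pr_eq, hz]
  refine Finset.sum_le_sum fun ω _ => ?_
  by_cases hx : X ω = x <;> simp [hx, hp0 ω]
  split <;> simp [hp0 ω]

lemma pr_pair_le_comp (hp0 : ∀ ω, 0 ≤ p ω) (hz : ∀ ω, Z ω = g (X ω))
    (W : Ω → γ) (x : α) (w : γ) :
    pr p (pair X W) (x, w) ≤ pr p (pair Z W) (g x, w) := by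
  simp only [pr_eq, pair, Prod.mk.injEq, hz]
  refine Finset.sum_le_sum fun ω _ => ?_
  by_cases hx : X ω = x <;> by_cases hw : W ω = w <;> simp [hx, hw, hp0 ω]
  split <;> simp [hp0 ω]

end Det

/-! Real-number helper lemmas -/

lemma sub_le_mul_log {P a b : ℝ} (hP : 0 ≤ P) (ha : P ≤ a) (hb : P ≤ b) (hb0 : 0 ≤ b) :
    P - a * b ≤ P * Real.log (P / (a * b)) := by
  rcases eq_or_lt_of_le hP with h | h
  · rw [← h]
    have : 0 ≤ a * b := mul_nonneg (h ▸ ha) hb0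
    simp; linarith
  · have ha0 : 0 < a := lt_of_lt_of_le h ha
    have hb0' : 0 < b := lt_of_lt_of_le h hb
    have hab : 0 < a * b := mul_pos ha0 hb0'
    have hlog := Real.log_le_sub_one_of_pos (show 0 < a * b / P by positivity)
    rw [Real.log_div hab.ne' h.ne'] at hlog
    rw [Real.log_div h.ne' hab.ne']
    have h1 : a * b / P - 1 = (a * b - P) / P := by field_simp
    rw [h1] at hlog
    have h2 : (a * b - P) / P * P = a * b - P := div_mul_cancel₀ _ h.ne'
    nlinarith [hlog, h.le]

lemma log_split {P a b : ℝ} (hP : 0 ≤ P) (ha : P ≤ a) (hb : P ≤ b) :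
    P * Real.log (P / (a * b)) = -(P * Real.log a) + P * Real.log (P / b) := by
  rcases eq_or_lt_of_le hP with h | h
  · rw [← h]; ring
  · have ha0 : 0 < a := lt_of_lt_of_le h ha
    have hb0 : 0 < b := lt_of_lt_of_le h hb
    rw [Real.log_div h.ne' (mul_pos ha0 hb0).ne', Real.log_mul ha0.ne' hb0.ne',
      Real.log_div h.ne' hb0.ne']
    ring

lemma log_split3 {P a b : ℝ} (hP : 0 ≤ P) (ha : P ≤ a) (hb : P ≤ b) :
    P * Real.log (P / (a * b)) = P * Real.log P - P * Real.log a - P * Real.log b := by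
  rcases eq_or_lt_of_le hP with h | h
  · rw [← h]; ring
  · have ha0 : 0 < a := lt_of_lt_of_le h ha
    have hb0 : 0 < b := lt_of_lt_of_le h hb
    rw [Real.log_div h.ne' (mul_pos ha0 hb0).ne', Real.log_mul ha0.ne' hb0.ne']
    ring

/-! Nonnegativity of mutual information -/

lemma mi_nonneg {α β : Type*} [Fintype α] [Fintype β] {p : Ω → ℝ} (hp : IsProb p)
    (A : Ω → α) (B : Ω → β) : 0 ≤ mi p A B := by
  obtain ⟨hp0, hp1⟩ := hp
  have h1 : ∑ x : α, ∑ y : β, pr p (pair A B) (x, y) = 1 := by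
    simp only [pr_pair_fst]; rw [sum_pr, hp1]
  have h2 : ∑ x : α, ∑ y : β, pr p A x * pr p B y = 1 := by
    simp only [← Finset.mul_sum]
    rw [← Finset.sum_mul, sum_pr, sum_pr, hp1, one_mul]
  have hle : ∑ x : α, ∑ y : β, (pr p (pair A B) (x, y) - pr p A x * pr p B y)
      ≤ mi p A B := by
    unfold mi
    refine Finset.sum_le_sum fun x _ => Finset.sum_le_sum fun y _ => ?_
    exact sub_le_mul_log (pr_nonneg hp0 _ _) (pr_pair_le_fst hp0 A B x y)
      (pr_pair_le_snd hp0 A B x y) (pr_nonneg hp0 B y)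
  have hz : ∑ x : α, ∑ y : β, (pr p (pair A B) (x, y) - pr p A x * pr p B y) = 0 := by
    simp only [Finset.sum_sub_distrib, h1, h2, sub_self]
  linarith

/-! Grouping a sum over α by the value of g : α → β -/

lemma sum_comp_weight {α β : Type*} [Fintype α] [Fintype β] {g : α → β}
    (q : α → ℝ) (r : β → ℝ) (h : ∀ z, r z = ∑ x, if g x = z then q x else 0)
    (φ : β → ℝ) : ∑ x, q x * φ (g x) = ∑ z, r z * φ z := by
  have step : ∀ x : α, q x * φ (g x) = ∑ z, if g x = z then q x * φ z else 0 := by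
    intro x; rw [Finset.sum_ite_eq]; simp
  simp only [step]
  rw [Finset.sum_comm]
  refine Finset.sum_congr rfl fun z _ => ?_
  rw [h z, Finset.sum_mul]
  refine Finset.sum_congr rfl fun x _ => ?_
  split <;> simp

/-! Mutual information with a deterministic function equals entropy -/

lemma mi_det {α β : Type*} [Fintype α] [Fintype β] {p : Ω → ℝ} (hp : IsProb p)
    {X : Ω → α} {Z : Ω → β} {g : α → β} (hz : ∀ ω, Z ω = g (X ω)) :
    mi p X Z = ent p Z := by
  obtain ⟨hp0, hp1⟩ := hp
  have step1 : ∀ x : α, ∑ z : β, pr p (pair X Z) (x, z) *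
      Real.log (pr p (pair X Z) (x, z) / (pr p X x * pr p Z z))
      = -(pr p X x * Real.log (pr p Z (g x))) := by
    intro x
    rw [Finset.sum_eq_single (g x)]
    · rw [pr_det hz, if_pos rfl]
      by_cases h0 : pr p X x = 0
      · simp [h0]
      · have hx : 0 < pr p X x := lt_of_le_of_ne (pr_nonneg hp0 X x) (Ne.symm h0)
        have hgz : 0 < pr p Z (g x) := lt_of_lt_of_le hx (pr_le_comp hp0 hz x)
        have hq : pr p X x / (pr p X x * pr p Z (g x)) = (pr p Z (g x))⁻¹ := by
          field_simp
        rw [hq, Real.log_inv]; ring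
    · intro z _ hzx
      rw [pr_det hz, if_neg hzx]
      simp
    · simp
  unfold mi ent
  simp only [step1, Finset.sum_neg_distrib]
  congr 1
  exact sum_comp_weight (pr p X) (pr p Z) (pr_comp hz) (fun z => Real.log (pr p Z z))

/-! Conditional mutual information with a deterministic function equals cond. entropy -/

lemma cmi_det {α β γ : Type*} [Fintype α] [Fintype β] [Fintype γ] {p : Ω → ℝ}
    (hp : IsProb p) {X : Ω → α} {Z : Ω → β} {g : α → β} (hz : ∀ ω, Z ω = g (X ω))
    (W : Ω → γ) : cmi p X Z W = condEnt p Z W := by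
  obtain ⟨hp0, hp1⟩ := hp
  have step1 : ∀ (x : α) (w : γ), ∑ z : β,
      pr p (pair X (pair Z W)) (x, z, w) *
        Real.log (pr p (pair X (pair Z W)) (x, z, w) * pr p W w /
          (pr p (pair X W) (x, w) * pr p (pair Z W) (z, w)))
      = -(pr p (pair X W) (x, w) *
          Real.log (pr p (pair Z W) (g x, w) / pr p W w)) := by
    intro x w
    rw [Finset.sum_eq_single (g x)]
    · rw [pr_det_pair hz, if_pos rfl]
      by_cases h0 : pr p (pair X W) (x, w) = 0
      · simp [h0]
      · have hQ : 0 < pr p (pair X W) (x, w) :=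
          lt_of_le_of_ne (pr_nonneg hp0 _ _) (Ne.symm h0)
        have hR : 0 < pr p (pair Z W) (g x, w) :=
          lt_of_lt_of_le hQ (pr_pair_le_comp hp0 hz W x w)
        have hW : 0 < pr p W w := lt_of_lt_of_le hQ (pr_pair_le_snd hp0 X W x w)
        have hq : pr p (pair X W) (x, w) * pr p W w /
            (pr p (pair X W) (x, w) * pr p (pair Z W) (g x, w))
            = pr p W w / pr p (pair Z W) (g x, w) := by
          rw [mul_div_mul_left _ _ hQ.ne']
        rw [hq, Real.log_div hW.ne' hR.ne', Real.log_div hR.ne' hW.ne']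
        ring
    · intro z _ hzx
      rw [pr_det_pair hz, if_neg hzx]
      simp
    · simp
  unfold cmi condEnt
  have lhs : ∑ x : α, ∑ z : β, ∑ w : γ,
      pr p (pair X (pair Z W)) (x, z, w) *
        Real.log (pr p (pair X (pair Z W)) (x, z, w) * pr p W w /
          (pr p (pair X W) (x, w) * pr p (pair Z W) (z, w)))
      = ∑ x : α, ∑ w : γ, -(pr p (pair X W) (x, w) *
          Real.log (pr p (pair Z W) (g x, w) / pr p W w)) := by
    refine Finset.sum_congr rfl fun x _ => ?_
    rw [Finset.sum_comm]
    exact Finset.sum_congr rfl fun w _ => step1 x w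
  rw [lhs]
  have rhs : ∀ w : γ, ∑ z : β, pr p (pair W Z) (w, z) *
      Real.log (pr p (pair W Z) (w, z) / pr p W w)
      = ∑ z : β, pr p (pair Z W) (z, w) *
        Real.log (pr p (pair Z W) (z, w) / pr p W w) := by
    intro w
    exact Finset.sum_congr rfl fun z _ => by rw [pr_pair_comm p W Z w z]
  rw [Finset.sum_comm, ← Finset.sum_neg_distrib]
  refine Finset.sum_congr rfl fun w _ => ?_
  rw [rhs w, ← Finset.sum_neg_distrib]
  simp only [neg_mul_eq_mul_neg]
  exact sum_comp_weight (fun x => pr p (pair X W) (x, w))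
    (fun z => pr p (pair Z W) (z, w))
    (fun z => pr_comp_pair hz W z w)
    (fun z => -Real.log (pr p (pair Z W) (z, w) / pr p W w))

lemma ent_eq_double {α β : Type*} [Fintype α] [Fintype β] (p : Ω → ℝ)
    (A : Ω → α) (B : Ω → β) :
    ent p A = -∑ a, ∑ b, pr p (pair A B) (a, b) * Real.log (pr p A a) := by
  unfold ent
  congr 1
  refine Finset.sum_congr rfl fun a _ => ?_
  rw [← pr_pair_fst p A B a, Finset.sum_mul]

lemma ent_eq_double' {α β : Type*} [Fintype α] [Fintype β] (p : Ω → ℝ)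
    (A : Ω → α) (B : Ω → β) :
    ent p B = -∑ a, ∑ b, pr p (pair A B) (a, b) * Real.log (pr p B b) := by
  unfold ent
  congr 1
  rw [Finset.sum_comm]
  refine Finset.sum_congr rfl fun b _ => ?_
  rw [← pr_pair_snd p A B b, Finset.sum_mul]

lemma mi_eq_ent_sub_condEnt {α β : Type*} [Fintype α] [Fintype β] {p : Ω → ℝ}
    (hp : IsProb p) (A : Ω → α) (B : Ω → β) :
    mi p A B = ent p A - condEnt p A B := by
  obtain ⟨hp0, hp1⟩ := hp
  have hcond : condEnt p A B = -∑ a, ∑ b, pr p (pair A B) (a, b) *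
      Real.log (pr p (pair A B) (a, b) / pr p B b) := by
    unfold condEnt
    congr 1
    rw [Finset.sum_comm]
    refine Finset.sum_congr rfl fun a _ => Finset.sum_congr rfl fun b _ => ?_
    rw [pr_pair_comm p B A b a]
  rw [ent_eq_double p A B, hcond]
  unfold mi
  have key : ∀ (a : α) (b : β), pr p (pair A B) (a, b) *
      Real.log (pr p (pair A B) (a, b) / (pr p A a * pr p B b))
      = -(pr p (pair A B) (a, b) * Real.log (pr p A a))
        + pr p (pair A B) (a, b) * Real.log (pr p (pair A B) (a, b) / pr p B b) :=
    fun a b => log_split (pr_nonneg hp0 _ _) (pr_pair_le_fst hp0 A B a b)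
      (pr_pair_le_snd hp0 A B a b)
  simp only [key, Finset.sum_add_distrib, Finset.sum_neg_distrib]
  ring

lemma mi_eq_ent_add_ent_sub {α β : Type*} [Fintype α] [Fintype β] {p : Ω → ℝ}
    (hp : IsProb p) (A : Ω → α) (B : Ω → β) :
    mi p A B = ent p A + ent p B - ent p (pair A B) := by
  obtain ⟨hp0, hp1⟩ := hp
  have hAB : ent p (pair A B)
      = -∑ a, ∑ b, pr p (pair A B) (a, b) * Real.log (pr p (pair A B) (a, b)) := by
    unfold ent
    congr 1
    rw [Fintype.sum_prod_type]
  rw [ent_eq_double p A B, ent_eq_double' p A B, hAB]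
  unfold mi
  have key : ∀ (a : α) (b : β), pr p (pair A B) (a, b) *
      Real.log (pr p (pair A B) (a, b) / (pr p A a * pr p B b))
      = pr p (pair A B) (a, b) * Real.log (pr p (pair A B) (a, b))
        - pr p (pair A B) (a, b) * Real.log (pr p A a)
        - pr p (pair A B) (a, b) * Real.log (pr p B b) :=
    fun a b => log_split3 (pr_nonneg hp0 _ _) (pr_pair_le_fst hp0 A B a b)
      (pr_pair_le_snd hp0 A B a b)
  simp only [key, Finset.sum_sub_distrib]
  ring


/-- for deterministic Ẑ₁ = f₁(X₁), Ẑ₂ = f₂(X₂), interaction information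
I(X;Ẑ₁;Ẑ₂) is nonnegative and I(X;Ẑ₁,Ẑ₂) ≤ I(X₁;Ẑ₁) + I(X₂;Ẑ₂). -/
theorem deterministic_interaction_nonneg_and_mi_le
    {α₁ α₂ β₁ β₂ : Type*} [Fintype α₁] [Fintype α₂] [Fintype β₁] [Fintype β₂]
    (p : Ω → ℝ) (hp : IsProb p)
    (X₁ : Ω → α₁) (X₂ : Ω → α₂) (Z₁ : Ω → β₁) (Z₂ : Ω → β₂)
    (f₁ : α₁ → β₁) (f₂ : α₂ → β₂)
    (hf₁ : ∀ ω, Z₁ ω = f₁ (X₁ ω)) (hf₂ : ∀ ω, Z₂ ω = f₂ (X₂ ω)) :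
    0 ≤ ii p (pair X₁ X₂) Z₁ Z₂ ∧
      mi p (pair X₁ X₂) (pair Z₁ Z₂) ≤ mi p X₁ Z₁ + mi p X₂ Z₂ := by
  have hz1 : ∀ ω, Z₁ ω = (fun x : α₁ × α₂ => f₁ x.1) (pair X₁ X₂ ω) := fun ω => hf₁ ω
  have hpair : ∀ ω, pair Z₁ Z₂ ω
      = (fun x : α₁ × α₂ => (f₁ x.1, f₂ x.2)) (pair X₁ X₂ ω) := by
    intro ω; simp [pair, hf₁ ω, hf₂ ω]
  have hmiZ : 0 ≤ mi p Z₁ Z₂ := mi_nonneg hp Z₁ Z₂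
  constructor
  · unfold ii
    rw [mi_det (X := pair X₁ X₂) (g := fun x : α₁ × α₂ => f₁ x.1) hp hz1,
      cmi_det (X := pair X₁ X₂) (g := fun x : α₁ × α₂ => f₁ x.1) hp hz1 Z₂]
    have := mi_eq_ent_sub_condEnt hp Z₁ Z₂
    linarith
  · rw [mi_det (X := pair X₁ X₂) (g := fun x : α₁ × α₂ => (f₁ x.1, f₂ x.2)) hp hpair,
      mi_det (g := f₁) hp hf₁, mi_det (g := f₂) hp hf₂]
    have := mi_eq_ent_add_ent_sub hp Z₁ Z₂
    linarith


end GW
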